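/- arXiv:1304.4015 — 3 statements merged into one kernel-verified Lean document; each statement's English description precedes it below -/
import Mathlib

section
/- If a Lebesgue measurable, square integrable matrix function R : ℝ≥0 → Matrix (Fin l1) (Fin l2) ℝ satisfies the (L, ϑ)-persistency of excitation condition, i.e. ∫_t^{t+L} R(s) R(s)ᵀ ds ≥ ϑ • I for all t ≥ 0 with L, ϑ > 0, then for every ℓ ≥ L and every t ≥ 0 one has ∫_t^{t+ℓ} R(s) R(s)ᵀ ds ≥ (ϑ ℓ / (2L)) • I (inequality in the Loewner order on symmetric matrices). -/
/-!
Split `[t, t + ℓ]` into `n = ⌊ℓ / L⌋₊ ≥ 1` consecutive windows of length `L` followed by a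
remainder. Each window contributes at least `ϑ • 1`, and the remainder contributes a positive
semidefinite matrix because `R s * (R s)ᵀ` is one for every `s`; hence the integral is at least
`(n * ϑ) • 1`, and `ℓ / L < n + 1 ≤ 2 * n`. Beyond positivity of the integrand, the window
estimates only use that the positive cone is closed.
-/

open MeasureTheory Matrix

attribute [local instance] Matrix.normedAddCommGroup Matrix.normedSpace

open scoped ComplexOrder MatrixOrder

theorem Matrix.isClosed_setOf_posSemidef {n 𝕜 : Type*} [Fintype n] [RCLike 𝕜] :
    IsClosed {M : Matrix n n 𝕜 | M.PosSemidef} := by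
  simp only [posSemidef_iff_dotProduct_mulVec, Set.ofPred_and, Set.ofPred_forall]
  refine (isClosed_eq continuous_id.matrix_conjTranspose continuous_id).inter <|
    isClosed_iInter fun x => isClosed_le continuous_const ?_
  exact continuous_const.dotProduct (continuous_id.matrix_mulVec continuous_const)

/- Stated for the topology of the sup norm: it is the product topology, but only after unfolding
`Matrix.seminormedAddCommGroup`, which instance search does not do. -/
instance Matrix.instOrderClosedTopologySupNorm {n 𝕜 : Type*} [Fintype n] [RCLike 𝕜] :
    @OrderClosedTopology (Matrix n n 𝕜)
      (@UniformSpace.toTopologicalSpace _ (@PseudoMetricSpace.toUniformSpace _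
        (@SeminormedAddCommGroup.toPseudoMetricSpace _ Matrix.seminormedAddCommGroup))) _ :=
  ⟨isClosed_setOf_posSemidef.preimage (continuous_snd.sub continuous_fst)⟩

theorem Nat.le_two_mul_floor {α : Type*} [Semiring α] [LinearOrder α] [IsStrictOrderedRing α]
    [FloorSemiring α] {x : α} (hx : 1 ≤ x) : x ≤ 2 * ⌊x⌋₊ := by
  have h1 : (1 : α) ≤ ⌊x⌋₊ := by exact_mod_cast Nat.one_le_floor_iff x |>.2 hx
  calc x ≤ ⌊x⌋₊ + 1 := (Nat.lt_floor_add_one x).le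
    _ ≤ 2 * ⌊x⌋₊ := by rw [two_mul]; gcongr

namespace intervalIntegral

variable {E : Type*} [NormedAddCommGroup E] [NormedSpace ℝ E] [PartialOrder E]
  [IsOrderedAddMonoid E] [IsOrderedModule ℝ E] [ClosedIciTopology E] {f : ℝ → E} {a b c : ℝ}

theorem integral_nonneg_of_nonneg (hf : 0 ≤ f) (hab : a ≤ b) :
    0 ≤ ∫ s in a..b, f s := by
  rw [integral_of_le hab]
  exact MeasureTheory.integral_nonneg hf

theorem integral_mono_right_of_nonneg (hf : 0 ≤ f) (hab : a ≤ b) (hbc : b ≤ c)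
    (hint : IntervalIntegrable f volume a c) :
    ∫ s in a..b, f s ≤ ∫ s in a..c, f s := by
  have hint_ab : IntervalIntegrable f volume a b :=
    hint.mono_set (Set.uIcc_subset_uIcc_left (Set.mem_uIcc_of_le hab hbc))
  have hint_bc : IntervalIntegrable f volume b c :=
    hint.mono_set (Set.uIcc_subset_uIcc_right (Set.mem_uIcc_of_le hab hbc))
  rw [← integral_add_adjacent_intervals hint_ab hint_bc]
  exact le_add_of_nonneg_right (integral_nonneg_of_nonneg hf hbc)

end intervalIntegral

section Windows

variable {E : Type*} [NormedAddCommGroup E] {f : ℝ → E} {L t : ℝ}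

theorem intervalIntegrable_add_natCast_mul (hL : 0 ≤ L)
    (hint : ∀ t, 0 ≤ t → IntervalIntegrable f volume t (t + L)) (n : ℕ) (ht : 0 ≤ t) :
    IntervalIntegrable f volume t (t + n * L) := by
  simpa using IntervalIntegrable.trans_iterate (a := fun k : ℕ => t + k * L) (n := n)
    fun k _ => by simpa [add_mul, add_assoc] using hint (t + k * L) (by positivity)

variable [NormedSpace ℝ E] [PartialOrder E] [IsOrderedAddMonoid E]

theorem nsmul_le_intervalIntegral_add_natCast_mul {e : E} (hL : 0 ≤ L)
    (hint : ∀ t, 0 ≤ t → IntervalIntegrable f volume t (t + L))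
    (hwin : ∀ t, 0 ≤ t → e ≤ ∫ s in t..t + L, f s) (n : ℕ) (ht : 0 ≤ t) :
    n • e ≤ ∫ s in t..t + n * L, f s := by
  have hstep (k : ℕ) : t + (k + 1 : ℕ) * L = t + k * L + L := by push_cast; ring
  have hsum := intervalIntegral.sum_integral_adjacent_intervals
    (a := fun k : ℕ => t + k * L) (n := n)
    fun k _ => by simpa only [hstep] using hint (t + k * L) (by positivity)
  simp only [hstep, Nat.cast_zero, zero_mul, add_zero] at hsum
  calc n • e = ∑ _k ∈ Finset.range n, e := by simp
    _ ≤ ∑ k ∈ Finset.range n, ∫ s in t + k * L..t + k * L + L, f s :=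
      Finset.sum_le_sum fun k _ => hwin _ (by positivity)
    _ = ∫ s in t..t + n * L, f s := hsum

end Windows

theorem pe_lower_bound_on_long_intervals_general {l1 l2 : ℕ}
    (R : ℝ → Matrix (Fin l1) (Fin l2) ℝ) (L ϑ : ℝ)
    (hL : 0 < L) (hϑ : 0 < ϑ)
    (hsq : ∀ t : ℝ, 0 ≤ t → @IntervalIntegrable _ _ NormedAddGroup.toENormedAddMonoid
      (fun s => (R s * (R s)ᵀ : Matrix (Fin l1) (Fin l1) ℝ)) volume t (t + L))
    (hPE : ∀ t : ℝ, 0 ≤ t →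
      ((∫ s in t..(t + L), (R s * (R s)ᵀ : Matrix (Fin l1) (Fin l1) ℝ)) -
        ϑ • (1 : Matrix (Fin l1) (Fin l1) ℝ)).PosSemidef) :
    ∀ ℓ : ℝ, L ≤ ℓ → ∀ t : ℝ, 0 ≤ t →
      ((∫ s in t..(t + ℓ), (R s * (R s)ᵀ : Matrix (Fin l1) (Fin l1) ℝ)) -
        (ϑ * ℓ / (2 * L)) • (1 : Matrix (Fin l1) (Fin l1) ℝ)).PosSemidef := by
  intro ℓ hℓ t ht
  have hRR : 0 ≤ fun s => R s * (R s)ᵀ := fun s => by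
    simpa using (posSemidef_self_mul_conjTranspose (R s)).nonneg
  set n := ⌊ℓ / L⌋₊
  have hnL : n * L ≤ ℓ := (le_div_iff₀ hL).1 (Nat.floor_le (div_nonneg (hL.le.trans hℓ) hL.le))
  have hℓn : ℓ ≤ (n + 1) * L := (div_le_iff₀ hL).1 (Nat.lt_floor_add_one _).le
  have hℓ2n : ℓ ≤ 2 * n * L := (div_le_iff₀ hL).1 (Nat.le_two_mul_floor ((one_le_div hL).2 hℓ))
  rw [← Matrix.le_iff]
  calc (ϑ * ℓ / (2 * L)) • (1 : Matrix (Fin l1) (Fin l1) ℝ) ≤ (n * ϑ) • 1 := by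
        refine smul_le_smul_of_nonneg_right ?_ PosSemidef.one.nonneg
        rw [div_le_iff₀ (by positivity)]
        linarith [mul_le_mul_of_nonneg_left hℓ2n hϑ.le]
    _ = n • ϑ • 1 := by rw [← smul_smul, Nat.cast_smul_eq_nsmul]
    _ ≤ ∫ s in t..t + n * L, R s * (R s)ᵀ :=
        nsmul_le_intervalIntegral_add_natCast_mul hL.le hsq hPE n ht
    _ ≤ ∫ s in t..t + ℓ, R s * (R s)ᵀ :=
        intervalIntegral.integral_mono_right_of_nonneg hRR
          (le_add_of_nonneg_right (by positivity)) (by linarith)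
          ((intervalIntegrable_add_natCast_mul hL.le hsq (n + 1) ht).mono_set <|
            Set.uIcc_subset_uIcc_left (Set.mem_uIcc_of_le (by linarith) (by push_cast; linarith)))

/-- Lemma A1: if a Lebesgue measurable, square integrable matrix function `R` is
`(L, ϑ)`-persistently exciting, then for every `ℓ ≥ L` and `t ≥ 0`,
`∫_t^{t+ℓ} R(s) R(s)ᵀ ds ≥ (ϑ ℓ / (2 L)) • I` in the Loewner order. -/
theorem pe_lower_bound_on_long_intervals {l1 l2 : ℕ}
    (R : ℝ → Matrix (Fin l1) (Fin l2) ℝ) (L ϑ : ℝ)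
    (hL : 0 < L) (hϑ : 0 < ϑ)
    (hmeas : ∀ i j, Measurable fun s => R s i j)
    (hsq : ∀ t : ℝ, 0 ≤ t → @IntervalIntegrable _ _ NormedAddGroup.toENormedAddMonoid
      (fun s => (R s * (R s)ᵀ : Matrix (Fin l1) (Fin l1) ℝ)) volume t (t + L))
    (hPE : ∀ t : ℝ, 0 ≤ t →
      ((∫ s in t..(t + L), (R s * (R s)ᵀ : Matrix (Fin l1) (Fin l1) ℝ)) -
        ϑ • (1 : Matrix (Fin l1) (Fin l1) ℝ)).PosSemidef) :
    ∀ ℓ : ℝ, L ≤ ℓ → ∀ t : ℝ, 0 ≤ t →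
      ((∫ s in t..(t + ℓ), (R s * (R s)ᵀ : Matrix (Fin l1) (Fin l1) ℝ)) -
        (ϑ * ℓ / (2 * L)) • (1 : Matrix (Fin l1) (Fin l1) ℝ)).PosSemidef :=
  pe_lower_bound_on_long_intervals_general R L ϑ hL hϑ hsq hPE
end

section
/- For any real square matrix S, the operator norm of the matrix exponential satisfies ‖exp(S)‖ ≤ exp(μ(S)), where μ(S) = (1/2) λ_max(S + Sᵀ) is the logarithmic norm of S (λ_max denoting the maximal eigenvalue of the symmetric matrix S + Sᵀ). -/
/-!
Along the flow `x(t) = exp(tS) x` one has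
`d/dt ‖x‖² = 2⟪S x, x⟫ = ⟪(S + Sᵀ) x, x⟫ ≤ λ_max ‖x‖²`, the last step by the spectral theorem
for the symmetric matrix `S + Sᵀ`. Grönwall's inequality gives `‖exp(S) x‖² ≤ exp(λ_max) ‖x‖²`, and taking square roots yields the bound.
-/

open Matrix
open scoped RealInnerProductSpace

theorem LinearMap.IsSymmetric.inner_apply_self_le_iSup_eigenvalues_mul
    {E : Type*} [NormedAddCommGroup E] [InnerProductSpace ℝ E] [FiniteDimensional ℝ E]
    {T : E →ₗ[ℝ] E} {n : ℕ} (hT : T.IsSymmetric) (hn : Module.finrank ℝ E = n) (x : E) :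
    ⟪T x, x⟫ ≤ (⨆ i, hT.eigenvalues hn i) * ‖x‖ ^ 2 := by
  set b := hT.eigenvectorBasis hn
  have hle : ∀ i, hT.eigenvalues hn i ≤ ⨆ j, hT.eigenvalues hn j :=
    le_ciSup (Set.finite_range _).bddAbove
  calc ⟪T x, x⟫ = ∑ i, hT.eigenvalues hn i * b.repr x i ^ 2 := by
        rw [← b.repr.inner_map_map, PiLp.inner_apply]
        refine Finset.sum_congr rfl fun i _ => ?_
        rw [hT.eigenvectorBasis_apply_self_apply]
        simp only [Real.ringHom_apply, RCLike.inner_apply]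
        ring
    _ ≤ ∑ i, (⨆ j, hT.eigenvalues hn j) * b.repr x i ^ 2 := by
        gcongr with i; exact hle i
    _ = (⨆ j, hT.eigenvalues hn j) * ‖x‖ ^ 2 := by
        rw [← Finset.mul_sum, ← b.repr.norm_map, EuclideanSpace.norm_sq_eq]
        simp

namespace Matrix

variable {ι : Type*} [Fintype ι] [DecidableEq ι]

theorem IsHermitian.inner_toEuclideanCLM_self_le {A : Matrix ι ι ℝ} (hA : A.IsHermitian)
    (x : EuclideanSpace ℝ ι) :
    ⟪toEuclideanCLM (𝕜 := ℝ) A x, x⟫ ≤ (⨆ i, hA.eigenvalues i) * ‖x‖ ^ 2 := by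
  have := (isSymmetric_toEuclideanLin_iff.mpr hA).inner_apply_self_le_iSup_eigenvalues_mul
    finrank_euclideanSpace x
  rwa [← (Fintype.equivOfCardEq (Fintype.card_fin _)).symm.iSup_comp] at this

theorem inner_toEuclideanCLM_add_transpose_self (A : Matrix ι ι ℝ) (x : EuclideanSpace ℝ ι) :
    ⟪toEuclideanCLM (𝕜 := ℝ) (A + Aᵀ) x, x⟫ = 2 * ⟪toEuclideanCLM (𝕜 := ℝ) A x, x⟫ := by
  rw [real_inner_comm x, real_inner_comm x, inner_toEuclideanCLM, inner_toEuclideanCLM,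
    add_mulVec, dotProduct_add, mulVec_transpose, dotProduct_comm _ (_ ᵥ* A),
    ← dotProduct_mulVec]
  ring

open scoped Matrix.Norms.L2Operator in
theorem toEuclideanCLM_exp {𝕜 : Type*} [RCLike 𝕜] (A : Matrix ι ι 𝕜) :
    toEuclideanCLM (𝕜 := 𝕜) (NormedSpace.exp A) =
      NormedSpace.exp (toEuclideanCLM (𝕜 := 𝕜) A) := by
  let : NormedAlgebra ℚ (Matrix ι ι 𝕜) := .restrictScalars ℚ 𝕜 _
  exact NormedSpace.map_exp (toEuclideanCLM (n := ι) (𝕜 := 𝕜))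
    (LinearMap.continuous_of_finiteDimensional
      (toEuclideanCLM (n := ι) (𝕜 := 𝕜)).toAlgEquiv.toLinearMap) A

end Matrix

namespace ContinuousLinearMap

variable {E : Type*} [NormedAddCommGroup E] [InnerProductSpace ℝ E] [CompleteSpace E]

theorem hasDerivAt_norm_sq_exp_smul_apply (A : E →L[ℝ] E) (x : E) (t : ℝ) :
    HasDerivAt (fun s : ℝ => ‖NormedSpace.exp (s • A) x‖ ^ 2)
      (2 * ⟪A (NormedSpace.exp (t • A) x), NormedSpace.exp (t • A) x⟫) t := by
  have hflow : HasDerivAt (fun s : ℝ => NormedSpace.exp (s • A) x)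
      (A (NormedSpace.exp (t • A) x)) t := by
    simpa using (hasDerivAt_exp_smul_const' A t).clm_apply (hasDerivAt_const t x)
  simpa [real_inner_comm] using hflow.norm_sq

theorem norm_exp_smul_le_of_inner_apply_self_le (A : E →L[ℝ] E) {c : ℝ}
    (hA : ∀ x, ⟪A x, x⟫ ≤ c * ‖x‖ ^ 2) {t : ℝ} (ht : 0 ≤ t) :
    ‖NormedSpace.exp (t • A)‖ ≤ Real.exp (c * t) := by
  refine opNorm_le_bound _ (Real.exp_nonneg _) fun x => ?_
  have hsq : ‖NormedSpace.exp (t • A) x‖ ^ 2 ≤ ‖x‖ ^ 2 * Real.exp (2 * c * t) := by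
    have hderiv := hasDerivAt_norm_sq_exp_smul_apply A x
    have := le_gronwallBound_of_liminf_deriv_right_le (δ := ‖x‖ ^ 2) (K := 2 * c) (ε := 0)
      (a := 0) (b := t) (fun s _ => (hderiv s).continuousAt.continuousWithinAt)
      (fun s _ _ hr => (hderiv s).hasDerivWithinAt.liminf_right_slope_le hr)
      (by simp) (fun s _ => by linarith [hA (NormedSpace.exp (s • A) x)]) t ⟨ht, le_rfl⟩
    simpa [gronwallBound_ε0] using this
  rw [← pow_le_pow_iff_left₀ (norm_nonneg _) (by positivity) two_ne_zero]
  calc ‖NormedSpace.exp (t • A) x‖ ^ 2 ≤ ‖x‖ ^ 2 * Real.exp (2 * c * t) := hsq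
    _ = (Real.exp (c * t) * ‖x‖) ^ 2 := by rw [mul_pow, ← Real.exp_nat_mul]; ring_nf

end ContinuousLinearMap

/-- The Euclidean operator norm of the matrix exponential is bounded by the
exponential of the logarithmic norm `μ(S) = ½ λ_max(S + Sᵀ)`. -/
theorem opNorm_exp_le_exp_logNorm {n : ℕ}
    (S : Matrix (Fin n) (Fin n) ℝ)
    (h : (S + Sᵀ).IsHermitian) :
    ‖Matrix.toEuclideanCLM (𝕜 := ℝ) (NormedSpace.exp S)‖ ≤
      Real.exp ((1 / 2) * ⨆ i, h.eigenvalues i) := by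
  have hS : ∀ x, ⟪toEuclideanCLM (𝕜 := ℝ) S x, x⟫ ≤
      (1 / 2) * (⨆ i, h.eigenvalues i) * ‖x‖ ^ 2 := by
    intro x
    have := h.inner_toEuclideanCLM_self_le x
    rw [inner_toEuclideanCLM_add_transpose_self] at this
    linarith
  rw [toEuclideanCLM_exp, ← one_smul ℝ (toEuclideanCLM (𝕜 := ℝ) S),
    ← mul_one (1 / 2 * _)]
  exact ContinuousLinearMap.norm_exp_smul_le_of_inner_apply_self_le _ hS zero_le_one
end

section
/- Along solutions of the system x₁' = x₂, x₂' = −u + ϑ with the linear feedback u = α(k+1)(x₁ − nπ + x₂), where α ≥ 1 and k > (1/2) ω⁴, the Lyapunov function V(x₁, x₂) = (1/2) ω⁴ ((x₁ − nπ)² + (x₁ − nπ + x₂)²) satisfies the dissipation inequality d/dt V ≤ −ω⁴ (x₁ − nπ)² − α ω⁴ (k + 1 − α⁻¹(1 + ω⁴/2)) (x₁ − nπ + x₂)² + (1/2) ϑ². -/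
/-- Dissipation inequality for `V = ½ ω⁴ ((x₁-nπ)² + (x₁-nπ+x₂)²)` along
`x₁' = x₂`, `x₂' = -u + ϑ` with `u = α(k+1)(x₁ - nπ + x₂)`:
`V̇ ≤ -ω⁴(x₁-nπ)² - αω⁴(k+1-α⁻¹(1+ω⁴/2))(x₁-nπ+x₂)² + ½ϑ²`. -/
theorem lyapunov_dissipation (ω α k : ℝ) (hω : 0 < ω) (hα : 1 ≤ α)
    (hk : (1 / 2) * ω ^ 4 < k) (n : ℤ) (x₁ x₂ ϑ : ℝ) :
    ω ^ 4 * ((x₁ - n * Real.pi) + (x₁ - n * Real.pi + x₂)) * x₂ +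
      ω ^ 4 * (x₁ - n * Real.pi + x₂) * (-(α * (k + 1) * (x₁ - n * Real.pi + x₂)) + ϑ) ≤
    -(ω ^ 4) * (x₁ - n * Real.pi) ^ 2 -
      α * ω ^ 4 * (k + 1 - α⁻¹ * (1 + ω ^ 4 / 2)) * (x₁ - n * Real.pi + x₂) ^ 2 +
      (1 / 2) * ϑ ^ 2 := by
  have hα0 : α ≠ 0 := by linarith
  have key : α * ω ^ 4 * (k + 1 - α⁻¹ * (1 + ω ^ 4 / 2)) =
      α * ω ^ 4 * (k + 1) - ω ^ 4 * (1 + ω ^ 4 / 2) := by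
    field_simp
  rw [key]
  nlinarith [sq_nonneg (ω ^ 4 * (x₁ - n * Real.pi + x₂) - ϑ)]
end
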